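/- For every integer k ≥ 0, the characteristic polynomial det(x·I - R_{4k+3}) of the (4k+3)×(4k+3) matrix R_{4k+3} over the field ℤ/3ℤ equals (x^4 - 1)^k (x + 1)(x^2 + 1) if k is even, and (x^4 - 1)^k (x - 1)(x^2 + 1) if k is odd. -/

import Mathlib

/-!
Reversing the indices of `R_n` and transposing gives the matrix, in the monomial basis of
polynomials of degree `< n`, of `q ↦ (X + 1)^(n-1) q(1/(X + 1))`, the action of the Möbius map
`t ↦ 1/(t + 1)` on binary forms of degree `n - 1`. If `α, β` are the roots of `t² = t + 1`, then
`1 + α (X + 1) = α (X + α)`, so the products `(X + α)^a (X + β)^(n-1-a)` are eigenvectors with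
eigenvalues `α^a β^(n-1-a)`; they form a basis once `β - α` is invertible, since shifting `X` by `α`
makes their coefficient matrix triangular.

Over `𝔽₃` the roots lie in `𝔽₉`, with `αβ = -1` and `α⁴ = β⁴ = -1`. Hence the eigenvalues are
`c wᵃ` with `c = β^(n-1)` and `w = -α²` a primitive fourth root of unity. For `n = 4k + 3` they run
`k` times through the four fourth roots of `c⁴ = 1`, contributing `(X⁴ - 1)^k`, and the remaining
three, `c, cw, -c` with `c² = -1` and `cw = -(-1)^k`, contribute `(X² + 1)(X + (-1)^k)`.
-/

open Polynomial

/-- `R n` over `ℤ/3ℤ`: the `(i,j)` entry (1-based) is `C(i-1, n-j)` mod 3. -/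
def binR3 (n : ℕ) : Matrix (Fin n) (Fin n) (ZMod 3) :=
  fun i j => (Nat.choose i (n - 1 - j) : ZMod 3)

open Matrix Finset

section

variable {R : Type*} [CommRing R]

theorem Polynomial.coeff_comp_eq_sum_range (p q : R[X]) {n : ℕ} (hp : p.natDegree < n) (i : ℕ) :
    (p.comp q).coeff i = ∑ j ∈ range n, p.coeff j * (q ^ j).coeff i := by
  rw [comp_eq_sum_left, p.sum_over_range' (by simp) n hp, finsetSum_coeff]
  simp only [coeff_C_mul]

theorem Polynomial.reflect_X_add_C_pow (c : R) (a : ℕ) :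
    reflect a ((X + C c) ^ a) = (1 + C c * X) ^ a := by
  induction a with
  | zero => simp
  | succ a ih =>
    have h : (X + C c).natDegree ≤ 1 := by compute_degree
    have ha : ((X + C c) ^ a).natDegree ≤ a := by simpa using natDegree_pow_le_of_le a h
    rw [pow_succ, reflect_mul _ _ ha h, ih, reflect_add, reflect_one_X, reflect_C, pow_one,
      add_comm, ← pow_succ]

noncomputable def coeffMatrix {n : ℕ} (p : Fin n → R[X]) : Matrix (Fin n) (Fin n) R :=
  of fun i a => (p a).coeff i

theorem coeffMatrix_comp {n : ℕ} (p : Fin n → R[X]) (hp : ∀ a, (p a).natDegree < n) (q : R[X]) :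
    coeffMatrix (fun a => (p a).comp q) =
      coeffMatrix (fun j : Fin n => q ^ (j : ℕ)) * coeffMatrix p := by
  ext i a
  simp only [coeffMatrix, mul_apply, of_apply, coeff_comp_eq_sum_range _ q (hp a),
    ← Fin.sum_univ_eq_sum_range (fun j => (p a).coeff j * (q ^ j).coeff i), mul_comm]

theorem det_coeffMatrix_X_add_C_pow {n : ℕ} (c : R) :
    (coeffMatrix fun j : Fin n => (X + C c) ^ (j : ℕ)).det = 1 := by
  rw [det_of_isUpperTriangular]
  · simp [coeffMatrix, coeff_X_add_C_pow]
  · intro i j hij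
    simp [coeffMatrix, coeff_X_add_C_pow, Nat.choose_eq_zero_of_lt (show (j : ℕ) < i from hij)]

theorem det_coeffMatrix_X_pow_mul_X_add_C_pow {n : ℕ} (c : R) :
    (coeffMatrix fun a : Fin n => X ^ (a : ℕ) * (X + C c) ^ (n - 1 - a)).det =
      ∏ a : Fin n, c ^ (n - 1 - a) := by
  rw [det_of_isLowerTriangular]
  · simp [coeffMatrix, coeff_X_pow_mul', coeff_X_add_C_pow]
  · intro i j hij
    simp only [coeffMatrix, of_apply, coeff_X_pow_mul']
    exact if_neg (not_le.mpr hij)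

theorem coeffMatrix_C_mul {n : ℕ} (p : Fin n → R[X]) (d : Fin n → R) :
    coeffMatrix (fun a => C (d a) * p a) = coeffMatrix p * diagonal d := by
  ext i a
  simp [coeffMatrix, mul_comm]

theorem charpoly_eq_of_mul_eq_mul {n : Type*} [Fintype n] [DecidableEq n] {A P D : Matrix n n R}
    (hP : IsUnit P.det) (h : A * P = P * D) : A.charpoly = D.charpoly := by
  have hA : A = P * (D * P⁻¹) := by
    rw [← Matrix.mul_assoc, ← h, Matrix.mul_assoc, mul_nonsing_inv _ hP, Matrix.mul_one]
  rw [hA, charpoly_mul_comm, Matrix.mul_assoc, nonsing_inv_mul _ hP, Matrix.mul_one]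

/-- `R_n`, transposed and with both indices reversed. -/
def binomialMatrix (R : Type*) [CommRing R] (n : ℕ) : Matrix (Fin n) (Fin n) R :=
  of fun i j => ((n - 1 - j : ℕ).choose i : R)

theorem binomialMatrix_mul_coeffMatrix {n : ℕ} (q : Fin n → R[X])
    (hq : ∀ a, (q a).natDegree ≤ n - 1) :
    binomialMatrix R n * coeffMatrix q =
      coeffMatrix fun a => (reflect (n - 1) (q a)).comp (X + 1) := by
  ext i a
  have hlt : (reflect (n - 1) (q a)).natDegree < n :=
    (natDegree_reflect_le.trans (max_le le_rfl (hq a))).trans_lt (by have := a.isLt; omega)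
  simp only [binomialMatrix, coeffMatrix, mul_apply, of_apply, coeff_comp_eq_sum_range _ _ hlt]
  rw [Fin.sum_univ_eq_sum_range (fun j => ((n - 1 - j).choose i : R) * (q a).coeff j),
    ← sum_range_reflect _ n]
  refine sum_congr rfl fun j hj => ?_
  rw [mem_range] at hj
  rw [coeff_reflect, revAt_le (by omega), coeff_X_add_one_pow, Nat.sub_sub_self (by omega),
    mul_comm]

theorem reflect_comp_X_add_one_of_sq_eq_add_one {α β : R} (hα : α ^ 2 = α + 1)
    (hβ : β ^ 2 = β + 1) (a b : ℕ) :
    (reflect (a + b) ((X + C α) ^ a * (X + C β) ^ b)).comp (X + 1) =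
      C (α ^ a * β ^ b) * ((X + C α) ^ a * (X + C β) ^ b) := by
  have hdeg (c : R) (m : ℕ) : ((X + C c) ^ m).natDegree ≤ m := by compute_degree
  have key {c : R} (hc : c ^ 2 = c + 1) : (1 + C c * X).comp (X + 1) = C c * (X + C c) := by
    simp only [add_comp, one_comp, mul_comp, C_comp, X_comp]
    have hC : C c ^ 2 = C c + 1 := by rw [← C_pow, hc, C_add, C_1]
    linear_combination (-1 : R[X]) * hC
  rw [reflect_mul _ _ (hdeg α a) (hdeg β b), reflect_X_add_C_pow, reflect_X_add_C_pow,
    mul_comp, pow_comp, pow_comp, key hα, key hβ, mul_pow, mul_pow, C_mul, C_pow, C_pow]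
  ring

theorem charpoly_binomialMatrix {n : ℕ} {α β : R} (hα : α ^ 2 = α + 1) (hβ : β ^ 2 = β + 1)
    (hunit : IsUnit (β - α)) :
    (binomialMatrix R n).charpoly = ∏ a : Fin n, (X - C (α ^ (a : ℕ) * β ^ (n - 1 - a))) := by
  set q : Fin n → R[X] := fun a => (X + C α) ^ (a : ℕ) * (X + C β) ^ (n - 1 - a)
  have hq : ∀ a, (q a).natDegree ≤ n - 1 := fun a => by
    have : (q a).natDegree ≤ a + (n - 1 - a) := by simp only [q]; compute_degree
    omega
  have heigen : binomialMatrix R n * coeffMatrix q =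
      coeffMatrix q * diagonal fun a : Fin n => α ^ (a : ℕ) * β ^ (n - 1 - a) := by
    rw [binomialMatrix_mul_coeffMatrix q hq, ← coeffMatrix_C_mul]
    congr 1
    funext a
    rw [← reflect_comp_X_add_one_of_sq_eq_add_one hα hβ, Nat.add_sub_of_le (by omega)]
  have hshift : coeffMatrix q = coeffMatrix (fun j : Fin n => (X + C α) ^ (j : ℕ)) *
      coeffMatrix fun a : Fin n => X ^ (a : ℕ) * (X + C (β - α)) ^ (n - 1 - a) := by
    rw [← coeffMatrix_comp _ (fun a => by
      have : (X ^ (a : ℕ) * (X + C (β - α)) ^ (n - 1 - a)).natDegree ≤ a + (n - 1 - a) := by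
        compute_degree
      omega)]
    congr 1
    funext a
    simp only [q, mul_comp, pow_comp, X_comp, add_comp, C_comp]
    rw [add_assoc, ← C_add, add_sub_cancel]
  have hdet : IsUnit (coeffMatrix q).det := by
    rw [hshift, det_mul, det_coeffMatrix_X_add_C_pow, one_mul,
      det_coeffMatrix_X_pow_mul_X_add_C_pow]
    exact IsUnit.prod_univ_iff.mpr fun a => hunit.pow _
  rw [charpoly_eq_of_mul_eq_mul hdet heigen, charpoly_diagonal]

theorem prod_range_four_X_sub_C_mul_pow {c w : R} (hw : w ^ 2 = -1) :
    ∏ a ∈ range 4, (X - C (c * w ^ a)) = X ^ 4 - C (c ^ 4) := by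
  have h2 : c * w ^ 2 = -c := by rw [hw, mul_neg_one]
  have h3 : c * w ^ 3 = -(c * w) := by linear_combination c * w * hw
  have hsq : C (c * w) ^ 2 = -C c ^ 2 := by
    rw [← C_pow, ← C_pow, mul_pow, hw, mul_neg_one, C_neg]
  rw [prod_range_succ, prod_range_succ, prod_range_succ, prod_range_one, pow_zero, mul_one,
    pow_one, h2, h3, C_neg, C_neg, C_pow]
  linear_combination (C c ^ 2 - X ^ 2) * hsq

theorem prod_range_four_mul_add_X_sub_C_mul_pow {c w : R} (hw : w ^ 2 = -1) (k r : ℕ) :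
    ∏ a ∈ range (4 * k + r), (X - C (c * w ^ a)) =
      (X ^ 4 - C (c ^ 4)) ^ k * ∏ a ∈ range r, (X - C (c * w ^ a)) := by
  have hw4 : w ^ 4 = 1 := by rw [show 4 = 2 * 2 from rfl, pow_mul, hw]; norm_num
  induction k with
  | zero => simp
  | succ k ih =>
    rw [show 4 * (k + 1) + r = 4 + (4 * k + r) by ring, prod_range_add,
      prod_range_four_X_sub_C_mul_pow hw]
    simp only [pow_add, hw4, one_mul, ih]
    ring

theorem prod_range_three_X_sub_C_mul_pow {c w : R} (hw : w ^ 2 = -1) :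
    ∏ a ∈ range 3, (X - C (c * w ^ a)) = (X - C (c * w)) * (X ^ 2 - C (c ^ 2)) := by
  rw [prod_range_succ, prod_range_succ, prod_range_one, pow_zero, mul_one, pow_one, hw,
    mul_neg_one, C_neg, C_pow]
  ring

theorem pow_four_eq_neg_one_of_sq_eq_add_one {x : R} (h3 : (3 : R) = 0) (hx : x ^ 2 = x + 1) :
    x ^ 4 = -1 := by
  linear_combination (x ^ 2 + x + 2) * hx + (x + 1) * h3

theorem pow_mul_pow_sub_of_mul_eq_neg_one {α β : R} (hαβ : α * β = -1) {a m : ℕ} (ha : a ≤ m) :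
    α ^ a * β ^ (m - a) = β ^ m * (-α ^ 2) ^ a := by
  rw [← Nat.sub_add_cancel ha, pow_add, Nat.add_sub_cancel, mul_assoc, ← mul_pow]
  rw [show β * -α ^ 2 = α by linear_combination (-α) * hαβ]
  ring

theorem charpoly_binomialMatrix_four_mul_add_three {α β : R} (h3 : (3 : R) = 0)
    (hα : α ^ 2 = α + 1) (hβ : β ^ 2 = β + 1) (hαβ : α * β = -1) (hunit : IsUnit (β - α))
    (k : ℕ) :
    (binomialMatrix R (4 * k + 3)).charpoly =
      (X ^ 4 - 1) ^ k * (X + C ((-1) ^ k)) * (X ^ 2 + 1) := by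
  have hα4 := pow_four_eq_neg_one_of_sq_eq_add_one h3 hα
  have hβ4 := pow_four_eq_neg_one_of_sq_eq_add_one h3 hβ
  have hw : (-α ^ 2) ^ 2 = -1 := by linear_combination hα4
  have hc2 : (β ^ (4 * k + 3 - 1)) ^ 2 = -1 := by
    rw [← pow_mul, show (4 * k + 3 - 1) * 2 = 4 * (2 * k + 1) by omega, pow_mul, hβ4,
      (odd_two_mul_add_one k).neg_one_pow]
  have hcw : β ^ (4 * k + 3 - 1) * -α ^ 2 = -(-1) ^ k := by
    rw [show 4 * k + 3 - 1 = 4 * k + 2 by omega, pow_add, pow_mul, hβ4]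
    linear_combination -(-1) ^ k * (α * β - 1) * hαβ
  have hc4 : (β ^ (4 * k + 3 - 1)) ^ 4 = 1 := by
    rw [show 4 = 2 * 2 from rfl, pow_mul, hc2]; norm_num
  rw [charpoly_binomialMatrix hα hβ hunit,
    Fin.prod_univ_eq_prod_range (fun a => X - C (α ^ a * β ^ (4 * k + 3 - 1 - a))),
    prod_congr rfl fun a ha => by
      rw [pow_mul_pow_sub_of_mul_eq_neg_one hαβ (by rw [mem_range] at ha; omega)],
    prod_range_four_mul_add_X_sub_C_mul_pow hw, prod_range_three_X_sub_C_mul_pow hw, hc4, hcw,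
    hc2, C_neg, C_neg, C_1, sub_neg_eq_add, sub_neg_eq_add]
  ring

end

theorem binR3_map {S : Type*} [CommRing S] (f : ZMod 3 →+* S) (n : ℕ) :
    (binR3 n).map f = (reindex Fin.revPerm Fin.revPerm (binomialMatrix S n))ᵀ := by
  ext i j
  simp only [binR3, binomialMatrix, map_apply, map_natCast, transpose_apply, reindex_apply,
    submatrix_apply, of_apply, Fin.revPerm_symm, Fin.revPerm_apply, Fin.val_rev]
  congr 2 <;> omega

theorem stmt_9 (k : ℕ) :
    (binR3 (4 * k + 3)).charpoly =
      if Even k then ((X ^ 4 - 1 : (ZMod 3)[X]) ^ k * (X + 1) * (X ^ 2 + 1))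
      else ((X ^ 4 - 1 : (ZMod 3)[X]) ^ k * (X - 1) * (X ^ 2 + 1)) := by
  let f : (ZMod 3)[X] := X ^ 2 - X - 1
  have hf : f.degree ≠ 0 := by
    rw [show f.degree = 2 by simp only [f]; compute_degree!]; decide
  let α := AdjoinRoot.root f
  have hα : α ^ 2 = α + 1 := by
    have := AdjoinRoot.eval₂_root f
    simp only [f, eval₂_sub, eval₂_pow, eval₂_X, eval₂_one] at this
    linear_combination this
  have h3 : (3 : AdjoinRoot f) = 0 := by
    rw [← map_ofNat (AdjoinRoot.of f) 3]
    exact (AdjoinRoot.of f).map_zero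
  apply map_injective _ (AdjoinRoot.of.injective_of_degree_ne_zero hf)
  rw [← charpoly_map, binR3_map, charpoly_transpose, charpoly_reindex,
    charpoly_binomialMatrix_four_mul_add_three (β := 1 - α) h3 hα (by linear_combination hα)
      (by linear_combination -hα)
      (IsUnit.of_mul_eq_one (α - (1 - α)) (by linear_combination -4 * hα - 2 * h3))]
  simp only [Polynomial.map_mul, Polynomial.map_pow, Polynomial.map_sub, Polynomial.map_add,
    Polynomial.map_one, map_X, apply_ite (Polynomial.map (AdjoinRoot.of f))]
  split_ifs with hk
  · rw [hk.neg_one_pow, C_1]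
  · rw [(Nat.not_even_iff_odd.mp hk).neg_one_pow, C_neg, C_1, ← sub_eq_add_neg]
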